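/- arXiv:1802.00289 — 4 statements merged into one kernel-verified Lean document; each statement's English description precedes it below -/
import Mathlib

section
/- Let A be a (not necessarily commutative) unital ring and let I be a two-sided ideal of A which is square-zero, i.e. a*b = 0 for all a, b ∈ I. Let ι be a type and let h : ι → ι → Aˣ be a family of units of A satisfying h i i = 1 and (h i j)*(h j i) = 1 for all i, j ∈ ι, and such that for all i, j, k ∈ ι the element s i j k := (h i j)*(h j k)*(h k i) − 1 (computed in A) belongs to I. Then for all indices i, j, k, l ∈ ι the following Čech 2-cocycle identity holds in A: (h i j)*(s j k l)*(h i j)⁻¹ − s i k l + s i j l − s i j k = 0. -/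
/-!
Write `t i j k = h i j * h j k * h k i` in the unit group, so that `s i j k = t i j k - 1`.
Using `(h p q)⁻¹ = h q p`, a pure group computation gives
`h i j * t j k l * (h i j)⁻¹ * t i j l = t i j k * t i k l`.
Modulo the square-zero ideal `I` the units `1 + s` multiply additively, `(1 + a) * (1 + b) = 1 + a + b`,
and `(1 + c)⁻¹ = 1 - c`; reading the group identity in `A` therefore turns it into the linear relation
among the `s`'s.
-/

section CycleProd

variable {ι G : Type*} [Group G]

def cycleProd (g : ι → ι → G) (i j k : ι) : G := g i j * g j k * g k i

theorem conj_cycleProd_mul_cycleProd {g : ι → ι → G} (hsym : ∀ i j, g i j * g j i = 1)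
    (i j k l : ι) :
    g i j * cycleProd g j k l * (g i j)⁻¹ * cycleProd g i j l
      = cycleProd g i j k * cycleProd g i k l := by
  have hinv : ∀ p q, g q p = (g p q)⁻¹ := fun p q => (inv_eq_of_mul_eq_one_right (hsym p q)).symm
  simp only [cycleProd]
  rw [hinv j l, hinv i k, hinv i l]
  group

end CycleProd

section SquareZero

variable {A : Type*} [Ring A] {I : TwoSidedIdeal A}

theorem eq_add_sub_of_one_add_mul_one_add (hI : ∀ a b : A, a ∈ I → b ∈ I → a * b = 0)
    {x a b c : A} (ha : a ∈ I) (hb : b ∈ I) (hc : c ∈ I)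
    (h : (1 + x) * (1 + c) = (1 + a) * (1 + b)) :
    x = a + b - c := by
  have hab := hI a b ha hb
  have hac := hI a c ha hc
  have hbc := hI b c hb hc
  have hcc := hI c c hc hc
  have hcinv : (1 + c) * (1 - c) = 1 :=
    calc (1 + c) * (1 - c) = 1 - c * c := by noncomm_ring
      _ = 1 := by rw [hcc, sub_zero]
  have hx : 1 + x = 1 + (a + b - c) :=
    calc 1 + x = (1 + a) * (1 + b) * (1 - c) := by rw [← h, mul_assoc, hcinv, mul_one]
      _ = 1 + (a + b - c) + (a * b - a * c - b * c - a * b * c) := by noncomm_ring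
      _ = 1 + (a + b - c) := by simp [hab, hac, hbc]
  exact add_left_cancel hx

end SquareZero

theorem cech_two_cocycle_identity_general
    {A : Type*} [Ring A] (I : TwoSidedIdeal A)
    (hI : ∀ a b : A, a ∈ I → b ∈ I → a * b = 0)
    {ι : Type*} (h : ι → ι → Aˣ)
    (hsym : ∀ i j, h i j * h j i = 1)
    (hs : ∀ i j k, ((h i j : A) * (h j k : A) * (h k i : A) - 1) ∈ I) :
    ∀ i j k l : ι,
      (h i j : A) * ((h j k : A) * (h k l : A) * (h l j : A) - 1) * ((h i j)⁻¹ : Aˣ)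
        - ((h i k : A) * (h k l : A) * (h l i : A) - 1)
        + ((h i j : A) * (h j l : A) * (h l i : A) - 1)
        - ((h i j : A) * (h j k : A) * (h k i : A) - 1) = 0 := by
  intro i j k l
  have hval : ∀ p q r,
      ((cycleProd h p q r : Aˣ) : A) = 1 + ((h p q : A) * (h q r : A) * (h r p : A) - 1) := by
    simp [cycleProd]
  have hunits := congrArg Units.val (conj_cycleProd_mul_cycleProd hsym i j k l)
  have hconj : ((h i j * cycleProd h j k l * (h i j)⁻¹ : Aˣ) : A)
      = 1 + (h i j : A) * ((h j k : A) * (h k l : A) * (h l j : A) - 1) * ((h i j)⁻¹ : Aˣ) := by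
    simp only [Units.val_mul, hval, mul_add, add_mul, mul_one, Units.mul_inv]
  rw [Units.val_mul (h i j * cycleProd h j k l * (h i j)⁻¹), hconj, Units.val_mul, hval, hval, hval]
    at hunits
  rw [eq_add_sub_of_one_add_mul_one_add hI (hs i j k) (hs i k l) (hs i j l) hunits]
  abel

/-- Čech 2-cocycle identity for the obstruction cochain attached to a square-zero
ideal `I` and a family of units `h` whose "coboundary defect" `s i j k` lies in `I`. -/
theorem cech_two_cocycle_identity
    {A : Type*} [Ring A] (I : TwoSidedIdeal A)
    (hI : ∀ a b : A, a ∈ I → b ∈ I → a * b = 0)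
    {ι : Type*} (h : ι → ι → Aˣ)
    (hrefl : ∀ i, h i i = 1)
    (hsym : ∀ i j, h i j * h j i = 1)
    (hs : ∀ i j k, ((h i j : A) * (h j k : A) * (h k i : A) - 1) ∈ I) :
    ∀ i j k l : ι,
      (h i j : A) * ((h j k : A) * (h k l : A) * (h l j : A) - 1) * ((h i j)⁻¹ : Aˣ)
        - ((h i k : A) * (h k l : A) * (h l i : A) - 1)
        + ((h i j : A) * (h j l : A) * (h l i : A) - 1)
        - ((h i j : A) * (h j k : A) * (h k i : A) - 1) = 0 :=
  cech_two_cocycle_identity_general I hI h hsym hs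
end

section
/- Let A be a (not necessarily commutative) unital ring and let I be a two-sided ideal of A which is square-zero, i.e. a*b = 0 for all a, b ∈ I. Let ι be a type and let h, h' : ι → ι → Aˣ be two families of units of A satisfying (h i j)*(h j i) = 1 and (h' i j)*(h' j i) = 1 for all i, j ∈ ι. Assume that for all i, j, k ∈ ι the element s i j k := (h i j)*(h j k)*(h k i) − 1 belongs to I, and that for all i, j ∈ ι the element u i j := (h' i j)*(h i j)⁻¹ − 1 belongs to I. Define s' i j k := (h' i j)*(h' j k)*(h' k i) − 1. Then for all i, j, k ∈ ι one has in A: s' i j k − s i j k = u i j + (h i j)*(u j k)*(h i j)⁻¹ − u i k; in other words, the cocycles s and s' differ by the twisted Čech coboundary of u. -/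
/-!
Write each lift as `h' i j = (1 + u i j) * h i j` with `u i j ∈ I`. Since `I` is square-zero, the
inverse of `1 + u` is `1 - u` and a product `(1 + x₁) ⋯ (1 + xₙ)` with all `xₘ ∈ I` equals
`1 + x₁ + ⋯ + xₙ`. Moving `h i j` past `1 + u j k` conjugates `u j k`, so
`h' i j * h' j k * h' k i` is the product of `1 + u i j`, `1 + h i j * u j k * (h i j)⁻¹`,
`1 + s i j k` and `1 - u i k`, which is linear in these four elements of `I`.
-/

section SquareZero

variable {A : Type*} [Ring A] {I : TwoSidedIdeal A}

theorem Units.mul_one_add_eq_one_add_conj_mul (u : Aˣ) (x : A) :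
    (u : A) * (1 + x) = (1 + u * x * (u⁻¹ : Aˣ)) * u := by
  simp [mul_add, add_mul, mul_assoc]

theorem eq_one_add_mul_inv_sub_one_mul (x : A) (u : Aˣ) :
    x = (1 + (x * (u⁻¹ : Aˣ) - 1)) * u := by
  simp [mul_assoc]

variable (hI : ∀ a b : A, a ∈ I → b ∈ I → a * b = 0)
include hI

theorem one_add_mul_one_add_of_mem {x y : A} (hx : x ∈ I) (hy : y ∈ I) :
    (1 + x) * (1 + y) = 1 + (x + y) := by
  rw [add_mul, mul_add, mul_add, hI x y hx hy]
  noncomm_ring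

theorem one_add_mul_one_sub_of_mem {x : A} (hx : x ∈ I) : (1 + x) * (1 - x) = 1 := by
  rw [sub_eq_add_neg, one_add_mul_one_add_of_mem hI hx (I.neg_mem hx), add_neg_cancel, add_zero]

theorem Units.val_inv_eq_inv_mul_one_sub_of_mem {u v : Aˣ} (hvu : (v : A) * (u⁻¹ : Aˣ) - 1 ∈ I) :
    ((v⁻¹ : Aˣ) : A) = (u⁻¹ : Aˣ) * (1 - ((v : A) * (u⁻¹ : Aˣ) - 1)) := by
  calc ((v⁻¹ : Aˣ) : A)
      = (v⁻¹ : Aˣ) * ((1 + ((v : A) * (u⁻¹ : Aˣ) - 1)) * (1 - ((v : A) * (u⁻¹ : Aˣ) - 1))) := by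
        rw [one_add_mul_one_sub_of_mem hI hvu, mul_one]
    _ = (u⁻¹ : Aˣ) * (1 - ((v : A) * (u⁻¹ : Aˣ) - 1)) := by
        simp only [add_sub_cancel, ← mul_assoc, Units.inv_mul, one_mul]

theorem lift_triple_product_sub_one {P Q R : Aˣ} {a b c : A} (ha : a ∈ I) (hb : b ∈ I)
    (hc : c ∈ I) (hσ : (P : A) * Q * (R⁻¹ : Aˣ) - 1 ∈ I) :
    (1 + a) * P * ((1 + b) * Q) * ((R⁻¹ : Aˣ) * (1 - c)) - 1
      = a + P * b * (P⁻¹ : Aˣ) + ((P : A) * Q * (R⁻¹ : Aˣ) - 1) - c := by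
  set b' : A := P * b * (P⁻¹ : Aˣ)
  set σ : A := (P : A) * Q * (R⁻¹ : Aˣ) - 1
  have hb' : b' ∈ I := I.mul_mem_right _ _ (I.mul_mem_left _ _ hb)
  have hab' : a + b' ∈ I := I.add_mem ha hb'
  have hprod : (1 + a) * P * ((1 + b) * Q) * ((R⁻¹ : Aˣ) * (1 - c))
      = (1 + a) * (1 + b') * (1 + σ) * (1 - c) := by
    have hconj : (P : A) * (1 + b) = (1 + b') * P := P.mul_one_add_eq_one_add_conj_mul b
    have hσ' : 1 + σ = (P : A) * Q * (R⁻¹ : Aˣ) := add_sub_cancel _ _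
    calc (1 + a) * P * ((1 + b) * Q) * ((R⁻¹ : Aˣ) * (1 - c))
        = (1 + a) * ((P : A) * (1 + b)) * Q * (R⁻¹ : Aˣ) * (1 - c) := by noncomm_ring
      _ = _ := by rw [hconj, hσ']; noncomm_ring
  rw [hprod, one_add_mul_one_add_of_mem hI ha hb',
    one_add_mul_one_add_of_mem hI hab' hσ, sub_eq_add_neg (1 : A),
    one_add_mul_one_add_of_mem hI (I.add_mem hab' hσ) (I.neg_mem hc)]
  abel

end SquareZero

/-- Two lifts of a cocycle along a square-zero extension give obstruction cocycles
that differ by the twisted Čech coboundary of `u i j = h' i j * (h i j)⁻¹ - 1`. -/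
theorem obstruction_cocycles_cohomologous
    {A : Type*} [Ring A] (I : TwoSidedIdeal A)
    (hI : ∀ a b : A, a ∈ I → b ∈ I → a * b = 0)
    {ι : Type*} (h h' : ι → ι → Aˣ)
    (hsym : ∀ i j, h i j * h j i = 1)
    (hsym' : ∀ i j, h' i j * h' j i = 1)
    (hs : ∀ i j k, ((h i j : A) * (h j k : A) * (h k i : A) - 1) ∈ I)
    (hu : ∀ i j, ((h' i j : A) * ((h i j)⁻¹ : Aˣ) - 1) ∈ I) :
    ∀ i j k : ι,
      ((h' i j : A) * (h' j k : A) * (h' k i : A) - 1)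
          - ((h i j : A) * (h j k : A) * (h k i : A) - 1)
        = ((h' i j : A) * ((h i j)⁻¹ : Aˣ) - 1)
            + (h i j : A) * ((h' j k : A) * ((h j k)⁻¹ : Aˣ) - 1) * ((h i j)⁻¹ : Aˣ)
            - ((h' i k : A) * ((h i k)⁻¹ : Aˣ) - 1) := by
  intro i j k
  have hki : h k i = (h i k)⁻¹ := eq_inv_of_mul_eq_one_right (hsym i k)
  have hki' : h' k i = (h' i k)⁻¹ := eq_inv_of_mul_eq_one_right (hsym' i k)
  have hs' := hs i j k
  rw [hki] at hs'
  rw [hki, hki']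
  conv_lhs =>
    rw [Units.val_inv_eq_inv_mul_one_sub_of_mem hI (hu i k),
      eq_one_add_mul_inv_sub_one_mul (h' i j : A) (h i j),
      eq_one_add_mul_inv_sub_one_mul (h' j k : A) (h j k),
      lift_triple_product_sub_one hI (hu i j) (hu j k) (hu i k) hs']
  abel
end

section
/- Let l ≥ 2 be a natural number and write λ := l − 1 for the last index of Fin l. Let α : Fin l → ℕ, let I : Fin l → Set ℝ be a family of nonempty sets of real numbers, and let ε > 0 and C > 0 be real numbers. Suppose that for all θ : Fin l → ℝ with θ j ∈ I j for every j, and for all r : Fin l → ℝ satisfying 0 < r j < ε for every j ≠ λ and ε/2 ≤ r λ < ε, one has Real.exp (Real.cos (∑ j, (α j : ℝ) * θ j) / ∏ j, (r j)^(α j)) ≤ C * ∏ j ≠ λ, (r j). Then: (a) α j ≥ 1 for every j ≠ λ, and (b) Real.cos (∑ j, (α j : ℝ) * θ j) < 0 for every θ with θ j ∈ I j for every j. -/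
/-!
Fix an angle `θ` in the domain and an index `j₀ ≠ λ`, and move only the radius `r j₀ = t`
towards `0`, all other radii staying at `ε / 2`. The hypothesis then reads
`exp (c / (t ^ α j₀ * Q)) ≤ K * t` on `0 < t < ε`, with `c = cos (∑ j, α j * θ j)` and `Q > 0`.
The right-hand side tends to `0`, while the left-hand side stays at the positive constant
`exp (c / Q)` if `α j₀ = 0`, and stays `≥ 1` if `c ≥ 0`.
-/

open Real Set Filter Topology Finset

lemma exists_mem_Ioo_mul_lt {δ L : ℝ} (hδ : 0 < δ) (hL : 0 < L) (K : ℝ) :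
    ∃ t ∈ Ioo 0 δ, K * t < L := by
  have hKt : Tendsto (fun t => K * t) (𝓝 0) (𝓝 0) := by
    simpa using (continuous_const_mul K).tendsto 0
  have hsmall : ∀ᶠ t in 𝓝[>] (0 : ℝ), t < δ ∧ K * t < L :=
    nhdsWithin_le_nhds ((gt_mem_nhds hδ).and (hKt.eventually (gt_mem_nhds hL)))
  obtain ⟨t, ⟨htδ, hlt⟩, ht0⟩ := (hsmall.and self_mem_nhdsWithin).exists
  exact ⟨t, ⟨ht0, htδ⟩, hlt⟩

lemma one_le_and_neg_of_exp_div_pow_le_mul {δ Q K c : ℝ} {k : ℕ} (hδ : 0 < δ) (hQ : 0 < Q)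
    (h : ∀ t ∈ Ioo 0 δ, exp (c / (t ^ k * Q)) ≤ K * t) : 1 ≤ k ∧ c < 0 := by
  constructor
  · by_contra! hk
    obtain ⟨t, ht, hlt⟩ := exists_mem_Ioo_mul_lt hδ (exp_pos (c / Q)) K
    have hle := h t ht
    rw [Nat.lt_one_iff.1 hk, pow_zero, one_mul] at hle
    linarith
  · by_contra! hc
    obtain ⟨t, ht, hlt⟩ := exists_mem_Ioo_mul_lt hδ one_pos K
    have hden : 0 < t ^ k * Q := mul_pos (pow_pos ht.1 k) hQ
    linarith [h t ht, one_le_exp (div_nonneg hc hden.le)]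

lemma exp_div_pow_le_mul_of_rapid_decay {ι : Type*} [Fintype ι] [DecidableEq ι] {lam j₀ : ι}
    (hj₀ : j₀ ≠ lam) (α : ι → ℕ) {ε C c : ℝ}
    (H : ∀ r : ι → ℝ, (∀ j, j ≠ lam → 0 < r j ∧ r j < ε) → ε / 2 ≤ r lam → r lam < ε →
      exp (c / ∏ j, r j ^ α j) ≤ C * ∏ j ∈ univ.erase lam, r j) :
    ∀ t ∈ Ioo 0 ε, exp (c / (t ^ α j₀ * ∏ j ∈ univ.erase j₀, (ε / 2) ^ α j))
      ≤ (C * ∏ _j ∈ univ.erase lam \ {j₀}, ε / 2) * t := by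
  rintro t ⟨ht0, htε⟩
  set r : ι → ℝ := Function.update (fun _ => ε / 2) j₀ t
  have hr_lam : r lam = ε / 2 := Function.update_of_ne hj₀.symm _ _
  have hr_mem : ∀ j, j ≠ lam → 0 < r j ∧ r j < ε := by
    intro j _
    rcases eq_or_ne j j₀ with rfl | hj
    · simp [r, ht0, htε]
    · simp only [r, Function.update_of_ne hj]
      constructor <;> linarith
  have hden : ∏ j, r j ^ α j = t ^ α j₀ * ∏ j ∈ univ.erase j₀, (ε / 2) ^ α j := by
    rw [← mul_prod_erase univ _ (mem_univ j₀)]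
    congr 1
    · simp [r]
    · exact prod_congr rfl fun j hj => by simp [r, ne_of_mem_erase hj]
  have hnum : ∏ j ∈ univ.erase lam, r j = t * ∏ _j ∈ univ.erase lam \ {j₀}, ε / 2 :=
    prod_update_of_mem (mem_erase.2 ⟨hj₀, mem_univ _⟩) _ _
  calc exp (c / (t ^ α j₀ * ∏ j ∈ univ.erase j₀, (ε / 2) ^ α j))
      = exp (c / ∏ j, r j ^ α j) := by rw [hden]
    _ ≤ C * ∏ j ∈ univ.erase lam, r j := H r hr_mem hr_lam.ge (by linarith)
    _ = (C * ∏ _j ∈ univ.erase lam \ {j₀}, ε / 2) * t := by rw [hnum]; ring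

theorem rapid_decay_forces_neg_cos_general
    (l : ℕ) (hl : 2 ≤ l) (lam : Fin l)
    (α : Fin l → ℕ) (I : Fin l → Set ℝ) (hI : ∀ j, (I j).Nonempty)
    (ε C : ℝ) (hε : 0 < ε)
    (H : ∀ θ : Fin l → ℝ, (∀ j, θ j ∈ I j) →
      ∀ r : Fin l → ℝ, (∀ j, j ≠ lam → 0 < r j ∧ r j < ε) →
        ε / 2 ≤ r lam → r lam < ε →
        Real.exp (Real.cos (∑ j, (α j : ℝ) * θ j) / ∏ j, (r j) ^ (α j))
          ≤ C * ∏ j ∈ Finset.univ.erase lam, r j) :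
    (∀ j, j ≠ lam → 1 ≤ α j) ∧
      ∀ θ : Fin l → ℝ, (∀ j, θ j ∈ I j) →
        Real.cos (∑ j, (α j : ℝ) * θ j) < 0 := by
  have key : ∀ θ : Fin l → ℝ, (∀ j, θ j ∈ I j) → ∀ j₀, j₀ ≠ lam →
      1 ≤ α j₀ ∧ Real.cos (∑ j, (α j : ℝ) * θ j) < 0 := fun θ hθ j₀ hj₀ =>
    one_le_and_neg_of_exp_div_pow_le_mul hε (by positivity)
      (exp_div_pow_le_mul_of_rapid_decay hj₀ α (H θ hθ))
  have : Nontrivial (Fin l) := Fin.nontrivial_iff_two_le.2 hl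
  refine ⟨fun j hj => (key (fun j => (hI j).some) (fun j => (hI j).some_mem) j hj).1,
    fun θ hθ => ?_⟩
  obtain ⟨j₀, hj₀⟩ := exists_ne lam
  exact (key θ hθ j₀ hj₀).2

/-- If `exp (cos (∑ j α j θ j) / ∏ j (r j)^(α j))` decays faster than
`∏_{j ≠ λ} r j` on a partial boundary polysector (the last radial variable staying
bounded away from `0`), then all exponents `α j`, `j ≠ λ`, are strictly positive
and `cos (∑ j α j θ j) < 0` on the whole angular domain. -/
theorem rapid_decay_forces_neg_cos
    (l : ℕ) (hl : 2 ≤ l) (lam : Fin l) (hlam : (lam : ℕ) = l - 1)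
    (α : Fin l → ℕ) (I : Fin l → Set ℝ) (hI : ∀ j, (I j).Nonempty)
    (ε C : ℝ) (hε : 0 < ε) (hC : 0 < C)
    (H : ∀ θ : Fin l → ℝ, (∀ j, θ j ∈ I j) →
      ∀ r : Fin l → ℝ, (∀ j, j ≠ lam → 0 < r j ∧ r j < ε) →
        ε / 2 ≤ r lam → r lam < ε →
        Real.exp (Real.cos (∑ j, (α j : ℝ) * θ j) / ∏ j, (r j) ^ (α j))
          ≤ C * ∏ j ∈ Finset.univ.erase lam, r j) :
    (∀ j, j ≠ lam → 1 ≤ α j) ∧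
      ∀ θ : Fin l → ℝ, (∀ j, θ j ∈ I j) →
        Real.cos (∑ j, (α j : ℝ) * θ j) < 0 :=
  rapid_decay_forces_neg_cos_general l hl lam α I hI ε C hε H
end

section
/- Let l ≥ 2 be a natural number and write λ := l − 1 for the last index of Fin l. Let α : Fin l → ℕ with α λ ≥ 1, let I : Fin l → Set ℝ, and let ε > 0 and C > 0 be real numbers. Suppose that for all θ : Fin l → ℝ with θ j ∈ I j for every j, and for all r : Fin l → ℝ satisfying 0 < r j < ε for every j ≠ λ and ε/2 ≤ r λ < ε, one has Real.exp (Real.cos (∑ j, (α j : ℝ) * θ j) / ∏ j, (r j)^(α j)) ≤ C * ∏ j ≠ λ, (r j). Let K : Fin l → Set ℝ be a family of nonempty compact subsets with K j ⊆ I j for every j. Then for every N : Fin l → ℕ there exists a constant C' > 0 such that for all θ with θ j ∈ K j for every j and all r : Fin l → ℝ with 0 < r j ≤ ε/2 for every j, one has Real.exp (Real.cos (∑ j, (α j : ℝ) * θ j) / ∏ j, (r j)^(α j)) ≤ C' * ∏ j, (r j)^(N j). -/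
/-!
On radii that are all `ε / 2` except one `rⱼ → 0` (with `j` not the last index) the right-hand
side of the hypothesis tends to `0`, so its left-hand side cannot stay bounded below: this forces
`cos (∑ αⱼ θⱼ) < 0` on the whole sector and `αⱼ ≥ 1` for every `j`. By compactness the cosine is
then at most `-δ < 0` on `∏ Kⱼ`, and `exp (-δ / ∏ rⱼ ^ αⱼ) ≤ M! δ⁻ᴹ (∏ rⱼ ^ αⱼ) ^ M` with
`M = ∑ Nⱼ` beats every monomial `∏ rⱼ ^ Nⱼ` because all `αⱼ ≥ 1`.
-/

open Finset Filter Topology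

section

variable {ι : Type*} [Fintype ι]

theorem Real.exp_neg_div_le {δ P : ℝ} (hδ : 0 < δ) (hP : 0 < P) (n : ℕ) :
    Real.exp (-δ / P) ≤ n.factorial / δ ^ n * P ^ n := by
  have h := Real.pow_div_factorial_le_exp (x := δ / P) (div_pos hδ hP).le n
  rw [neg_div, Real.exp_neg]
  calc (Real.exp (δ / P))⁻¹ ≤ ((δ / P) ^ n / n.factorial)⁻¹ := inv_anti₀ (by positivity) h
    _ = n.factorial / δ ^ n * P ^ n := by rw [div_pow]; field_simp

theorem prod_pow_le_prod_pow_mul {r : ι → ℝ} {ρ : ℝ} (hr0 : ∀ j, 0 ≤ r j) (hr : ∀ j, r j ≤ ρ)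
    {a N : ι → ℕ} (hN : ∀ j, N j ≤ a j) :
    ∏ j, r j ^ a j ≤ (∏ j, ρ ^ (a j - N j)) * ∏ j, r j ^ N j := by
  rw [← prod_mul_distrib]
  refine prod_le_prod (fun j _ ↦ pow_nonneg (hr0 j) _) fun j _ ↦ ?_
  calc r j ^ a j = r j ^ (a j - N j) * r j ^ N j := by rw [← pow_add, Nat.sub_add_cancel (hN j)]
    _ ≤ ρ ^ (a j - N j) * r j ^ N j :=
      mul_le_mul_of_nonneg_right (pow_le_pow_left₀ (hr0 j) (hr j) _) (pow_nonneg (hr0 j) _)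

theorem exp_neg_div_prod_pow_le {δ ρ : ℝ} (hδ : 0 < δ) {α : ι → ℕ} (hα : ∀ j, 1 ≤ α j)
    (N : ι → ℕ) {r : ι → ℝ} (hr0 : ∀ j, 0 < r j) (hr : ∀ j, r j ≤ ρ) :
    Real.exp (-δ / ∏ j, r j ^ α j) ≤
      ((∑ j, N j).factorial / δ ^ (∑ j, N j) * ∏ j, ρ ^ (α j * (∑ k, N k) - N j)) *
        ∏ j, r j ^ N j := by
  set M := ∑ j, N j
  have hNM (j : ι) : N j ≤ α j * M :=
    (single_le_sum (fun k _ ↦ Nat.zero_le (N k)) (mem_univ j)).trans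
      (Nat.le_mul_of_pos_left _ (hα j))
  calc Real.exp (-δ / ∏ j, r j ^ α j)
      ≤ M.factorial / δ ^ M * (∏ j, r j ^ α j) ^ M :=
        Real.exp_neg_div_le hδ (prod_pos fun j _ ↦ pow_pos (hr0 j) _) M
    _ = M.factorial / δ ^ M * ∏ j, r j ^ (α j * M) := by simp only [← prod_pow, ← pow_mul]
    _ ≤ M.factorial / δ ^ M * ((∏ j, ρ ^ (α j * M - N j)) * ∏ j, r j ^ N j) := by
        gcongr
        exact prod_pow_le_prod_pow_mul (fun j ↦ (hr0 j).le) hr hNM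
    _ = _ := by ring

end

section

variable {ι : Type*} [Fintype ι] [DecidableEq ι]

/-- Condition (12) at a fixed angle `θ`, where `s` stands for `cos (∑ αⱼ θⱼ)`. -/
def PartialDecay (lam : ι) (α : ι → ℕ) (ε C s : ℝ) : Prop :=
  ∀ r : ι → ℝ, (∀ j, j ≠ lam → 0 < r j ∧ r j < ε) → ε / 2 ≤ r lam → r lam < ε →
    Real.exp (s / ∏ j, r j ^ α j) ≤ C * ∏ j ∈ univ.erase lam, r j

namespace PartialDecay

variable {lam j : ι} {α : ι → ℕ} {ε C s : ℝ}

theorem le_zero_of_le_exp_update (h : PartialDecay lam α ε C s) (hε : 0 < ε) (hj : j ≠ lam)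
    {m : ℝ}
    (hm : ∀ t, 0 < t → m ≤ Real.exp (s / ∏ k, Function.update (fun _ ↦ ε / 2) j t k ^ α k)) :
    m ≤ 0 := by
  set ρ : ℝ → ι → ℝ := fun t ↦ Function.update (fun _ ↦ ε / 2) j t
  have hρ_lam (t : ℝ) : ρ t lam = ε / 2 := Function.update_of_ne hj.symm _ _
  have hlim : Tendsto (fun t ↦ C * ∏ k ∈ univ.erase lam, ρ t k) (𝓝[>] 0) (𝓝 0) := by
    have hcont : Continuous fun t ↦ C * ∏ k ∈ univ.erase lam, ρ t k := by
      refine continuous_const.mul (continuous_finsetProd _ fun k _ ↦ ?_)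
      by_cases hk : k = j
      · subst hk; simp only [ρ, Function.update_self]; exact continuous_id
      · simpa [ρ, hk] using continuous_const
    have hzero : C * ∏ k ∈ univ.erase lam, ρ 0 k = 0 := by
      rw [prod_eq_zero (mem_erase.2 ⟨hj, mem_univ j⟩) (by simp [ρ]), mul_zero]
    exact (hzero ▸ hcont.tendsto 0).mono_left nhdsWithin_le_nhds
  refine ge_of_tendsto hlim ?_
  filter_upwards [Ioo_mem_nhdsGT (half_pos hε)] with t ht
  refine (hm t ht.1).trans (h (ρ t) (fun k _ ↦ ?_) (hρ_lam t).ge (by linarith [hρ_lam t]))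
  by_cases hk : k = j
  · subst hk; simp only [ρ, Function.update_self]; constructor <;> linarith [ht.1, ht.2]
  · simp only [ρ, Function.update_of_ne hk]; constructor <;> linarith

theorem neg [Nontrivial ι] (h : PartialDecay lam α ε C s) (hε : 0 < ε) : s < 0 := by
  obtain ⟨j, hj⟩ := exists_ne lam
  by_contra! hs
  refine absurd (h.le_zero_of_le_exp_update hε hj fun t ht ↦ ?_) one_pos.not_ge
  refine Real.one_le_exp_iff.2 (div_nonneg hs (prod_nonneg fun k _ ↦ pow_nonneg ?_ _))
  by_cases hk : k = j
  · subst hk; simp [ht.le]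
  · simp only [Function.update_of_ne hk]; linarith

theorem one_le_exponent (h : PartialDecay lam α ε C s) (hε : 0 < ε) (hj : j ≠ lam) :
    1 ≤ α j := by
  by_contra! hα
  have hα0 : α j = 0 := by omega
  refine (Real.exp_pos (s / ∏ k, (ε / 2) ^ α k)).not_ge
    (h.le_zero_of_le_exp_update hε hj fun t _ ↦ le_of_eq ?_)
  congr 2
  refine prod_congr rfl fun k _ ↦ ?_
  by_cases hk : k = j
  · subst hk; simp [hα0]
  · simp [hk]

end PartialDecay

end

theorem rapid_decay_partial_implies_full_general
    (l : ℕ) (hl : 2 ≤ l) (lam : Fin l)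
    (α : Fin l → ℕ) (hαlam : 1 ≤ α lam)
    (I : Fin l → Set ℝ) (ε C : ℝ) (hε : 0 < ε)
    (H : ∀ θ : Fin l → ℝ, (∀ j, θ j ∈ I j) →
      ∀ r : Fin l → ℝ, (∀ j, j ≠ lam → 0 < r j ∧ r j < ε) →
        ε / 2 ≤ r lam → r lam < ε →
        Real.exp (Real.cos (∑ j, (α j : ℝ) * θ j) / ∏ j, (r j) ^ (α j))
          ≤ C * ∏ j ∈ Finset.univ.erase lam, r j)
    (K : Fin l → Set ℝ)
    (hKcompact : ∀ j, IsCompact (K j)) (hKI : ∀ j, K j ⊆ I j) :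
    ∀ N : Fin l → ℕ, ∃ C' : ℝ, 0 < C' ∧
      ∀ θ : Fin l → ℝ, (∀ j, θ j ∈ K j) →
        ∀ r : Fin l → ℝ, (∀ j, 0 < r j) → (∀ j, r j ≤ ε / 2) →
          Real.exp (Real.cos (∑ j, (α j : ℝ) * θ j) / ∏ j, (r j) ^ (α j))
            ≤ C' * ∏ j, (r j) ^ (N j) := by
  intro N
  have : Nontrivial (Fin l) := Fin.nontrivial_iff_two_le.2 hl
  have hdecay (θ : Fin l → ℝ) (hθ : θ ∈ Set.univ.pi K) :
      PartialDecay lam α ε C (Real.cos (∑ j, (α j : ℝ) * θ j)) :=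
    H θ fun j ↦ hKI j (hθ j (Set.mem_univ j))
  have hc : ContinuousOn (fun θ : Fin l → ℝ ↦ -Real.cos (∑ j, (α j : ℝ) * θ j))
      (Set.univ.pi K) := by fun_prop
  have hneg : ∀ θ ∈ Set.univ.pi K, 0 < -Real.cos (∑ j, (α j : ℝ) * θ j) :=
    fun θ hθ ↦ neg_pos.2 ((hdecay θ hθ).neg hε)
  obtain ⟨δ, hδ, hcos⟩ := (isCompact_univ_pi hKcompact).exists_forall_le' hc hneg
  refine ⟨(∑ j, N j).factorial / δ ^ (∑ j, N j) * ∏ j, (ε / 2) ^ (α j * (∑ k, N k) - N j),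
    mul_pos (by positivity) (prod_pos fun j _ ↦ pow_pos (half_pos hε) _),
    fun θ hθ r hr0 hr ↦ ?_⟩
  have hα (j : Fin l) : 1 ≤ α j := by
    rcases eq_or_ne j lam with rfl | hj
    exacts [hαlam, (hdecay θ fun j _ ↦ hθ j).one_le_exponent hε hj]
  have hP : 0 < ∏ j, r j ^ α j := prod_pos fun j _ ↦ pow_pos (hr0 j) _
  calc Real.exp (Real.cos (∑ j, (α j : ℝ) * θ j) / ∏ j, r j ^ α j)
      ≤ Real.exp (-δ / ∏ j, r j ^ α j) :=
        Real.exp_le_exp.2 (div_le_div_of_nonneg_right (le_neg.1 (hcos θ fun j _ ↦ hθ j)) hP.le)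
    _ ≤ _ := exp_neg_div_prod_pow_le hδ hα N hr0 hr

/-- Rapid decay on a partial boundary polysector (only the last radial variable
bounded away from `0`) implies, after shrinking the angular sector to compact
subsets, rapid decay in all radial variables. -/
theorem rapid_decay_partial_implies_full
    (l : ℕ) (hl : 2 ≤ l) (lam : Fin l) (hlam : (lam : ℕ) = l - 1)
    (α : Fin l → ℕ) (hαlam : 1 ≤ α lam)
    (I : Fin l → Set ℝ) (ε C : ℝ) (hε : 0 < ε) (hC : 0 < C)
    (H : ∀ θ : Fin l → ℝ, (∀ j, θ j ∈ I j) →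
      ∀ r : Fin l → ℝ, (∀ j, j ≠ lam → 0 < r j ∧ r j < ε) →
        ε / 2 ≤ r lam → r lam < ε →
        Real.exp (Real.cos (∑ j, (α j : ℝ) * θ j) / ∏ j, (r j) ^ (α j))
          ≤ C * ∏ j ∈ Finset.univ.erase lam, r j)
    (K : Fin l → Set ℝ) (hKne : ∀ j, (K j).Nonempty)
    (hKcompact : ∀ j, IsCompact (K j)) (hKI : ∀ j, K j ⊆ I j) :
    ∀ N : Fin l → ℕ, ∃ C' : ℝ, 0 < C' ∧
      ∀ θ : Fin l → ℝ, (∀ j, θ j ∈ K j) →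
        ∀ r : Fin l → ℝ, (∀ j, 0 < r j) → (∀ j, r j ≤ ε / 2) →
          Real.exp (Real.cos (∑ j, (α j : ℝ) * θ j) / ∏ j, (r j) ^ (α j))
            ≤ C' * ∏ j, (r j) ^ (N j) :=
  rapid_decay_partial_implies_full_general l hl lam α hαlam I ε C hε H K hKcompact hKI
end
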